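/- (Soundness of barycentric algebras.) Let (𝒜, ≻) be a collapsible barycentric F-algebra on a barycentric domain X, and let R be a PTRS over T(F,V) such that for every rule l → d ∈ R and every assignment α, ⟦l⟧_α ≻ E_X(overline(⟦d⟧_α)). Then R is strongly almost surely terminating. -/

import Mathlib

open scoped NNReal ENNReal

/-- A finite (probability) distribution on `A`: a finitely supported weight
function with total weight `1`. -/
structure FinDist (A : Type*) where
  w : A →₀ ℝ≥0
  sum_one : w.sum (fun _ p => p) = 1

/-- Multidistributions on `A`: finite multisets of weighted elements `p:a`. -/
abbrev MD (A : Type*) := Multiset (ℝ≥0 × A)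

namespace MD

/-- The total weight `|μ|` of a multidistribution. -/
def wt {A : Type*} (μ : MD A) : ℝ≥0 := (μ.map Prod.fst).sum

/-- Scalar multiplication `p·μ`. -/
def smul {A : Type*} (p : ℝ≥0) (μ : MD A) : MD A :=
  μ.map fun qa => (p * qa.1, qa.2)

/-- The expected value `E(f(μ)) = Σ_{p:a ∈ μ} p·f(a)`. -/
def exp {A : Type*} (f : A → ℝ≥0) (μ : MD A) : ℝ≥0 :=
  (μ.map fun pa => pa.1 * f pa.2).sum

end MD

namespace FinDist

/-- The multidistribution associated with a finite distribution. -/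
def toMD {A : Type*} (d : FinDist A) : MD A :=
  d.w.support.val.map fun a => (d.w a, a)

/-- The expected value `E(f(d)) = Σ_a d(a)·f(a)`. -/
def exp {A : Type*} (f : A → ℝ≥0) (d : FinDist A) : ℝ≥0 :=
  d.w.sum fun a p => p * f a

/-- Pushforward of a finite distribution along a map; this is
`overline(h(d))`, the collapse of the elementwise image of `d`. -/
noncomputable def map {A B : Type*} (h : A → B) (d : FinDist A) : FinDist B :=
  ⟨Finsupp.mapDomain h d.w, by
    rw [Finsupp.sum_mapDomain_index (fun _ => rfl) (fun _ _ _ => rfl)]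
    exact d.sum_one⟩

/-- The Dirac distribution. -/
noncomputable def dirac {A : Type*} (a : A) : FinDist A :=
  ⟨Finsupp.single a 1, by simp⟩

end FinDist

/-- A PARS over `A`: a set of probabilistic reductions `a → d`. -/
abbrev PARS (A : Type*) := A → FinDist A → Prop

/-- `a` is terminal (a normal form) if it has no reduction. -/
def PARS.Terminal {A : Type*} (P : PARS A) (a : A) : Prop := ∀ d, ¬ P a d

/-- The probabilistic reduction relation `⇒_P` on multidistributions. -/
inductive PARS.Step {A : Type*} (P : PARS A) : MD A → MD A → Prop
  | term (a : A) : P.Terminal a → PARS.Step P {(1, a)} 0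
  | rule (a : A) (d : FinDist A) : P a d → PARS.Step P {(1, a)} d.toMD
  | conv (n : ℕ) (p : Fin n → ℝ≥0) (μ ρ : Fin n → MD A) :
      (∑ i, p i) ≤ 1 → (∀ i, PARS.Step P (μ i) (ρ i)) →
      PARS.Step P (∑ i, MD.smul (p i) (μ i)) (∑ i, MD.smul (p i) (ρ i))

/-- An (infinite) reduction sequence of `P`. -/
def PARS.RedSeq {A : Type*} (P : PARS A) (μs : ℕ → MD A) : Prop :=
  ∀ n, P.Step (μs n) (μs (n + 1))

/-- A reduction sequence of `P` starting from `μ`. -/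
def PARS.RedSeqFrom {A : Type*} (P : PARS A) (μ : MD A) (μs : ℕ → MD A) : Prop :=
  μs 0 = μ ∧ P.RedSeq μs

/-- The expected derivation length `adl(⃗μ) = Σ_{n ≥ 1} |μ_n|`. -/
noncomputable def adl {A : Type*} (μs : ℕ → MD A) : ℝ≥0∞ :=
  ∑' n : ℕ, (MD.wt (μs (n + 1)) : ℝ≥0∞)

/-- The expected derivation height `adh_P(a)`. -/
noncomputable def adh {A : Type*} (P : PARS A) (a : A) : ℝ≥0∞ :=
  ⨆ (μs : ℕ → MD A) (_ : P.RedSeqFrom {(1, a)} μs), adl μs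

/-- Strong almost sure termination. -/
def PARS.SAST {A : Type*} (P : PARS A) : Prop := ∀ a, adh P a < ⊤

/-- Almost sure termination. -/
def PARS.AST {A : Type*} (P : PARS A) : Prop :=
  ∀ μs : ℕ → MD A, P.RedSeq μs →
    Filter.Tendsto (fun n => MD.wt (μs n)) Filter.atTop (nhds 0)

/-- `f` is a (probabilistic) ranking function for `P` with parameter `ε`. -/
def PARS.Ranking {A : Type*} (P : PARS A) (ε : ℝ≥0) (f : A → ℝ≥0) : Prop :=
  ∀ a d, P a d → f a ≥ ε + FinDist.exp f d
/-- First-order terms over signature `F` (with arities `ar`) and variables `V`. -/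
inductive Tm (F : Type*) (ar : F → ℕ) (V : Type*) : Type _ where
  | var : V → Tm F ar V
  | app : (f : F) → (Fin (ar f) → Tm F ar V) → Tm F ar V

namespace Tm

/-- Homomorphic extension of a substitution to terms. -/
def subst {F V : Type*} {ar : F → ℕ} (σ : V → Tm F ar V) : Tm F ar V → Tm F ar V
  | .var x => σ x
  | .app f ts => .app f (fun i => subst σ (ts i))

end Tm

/-- A (pre)context: a term with variables `V ⊕ Unit`, where `Sum.inr ()` is the hole `□`. -/
abbrev Ctx (F : Type*) (ar : F → ℕ) (V : Type*) := Tm F ar (V ⊕ Unit)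

/-- Number of occurrences of the hole `□` in a precontext. -/
def Ctx.holes {F V : Type*} {ar : F → ℕ} : Ctx F ar V → ℕ
  | .var (.inl _) => 0
  | .var (.inr _) => 1
  | .app _ ts => ∑ i, Ctx.holes (ts i)

/-- A context has exactly one occurrence of the hole. -/
def Ctx.IsCtx {F V : Type*} {ar : F → ℕ} (C : Ctx F ar V) : Prop := C.holes = 1

/-- `C[t]`: plugging a term into (the holes of) a precontext. -/
def Ctx.plug {F V : Type*} {ar : F → ℕ} (C : Ctx F ar V) (t : Tm F ar V) : Tm F ar V :=
  match C with
  | .var (.inl x) => .var x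
  | .var (.inr _) => t
  | .app f ts => .app f (fun i => Ctx.plug (ts i) t)

/-- An `F`-algebra on carrier `X`. -/
structure Alg (F : Type*) (ar : F → ℕ) (X : Type*) where
  I : (f : F) → (Fin (ar f) → X) → X

/-- The interpretation `⟦t⟧_α` of a term under assignment `α`. -/
def Alg.interp {F V X : Type*} {ar : F → ℕ} (A : Alg F ar X) (α : V → X) :
    Tm F ar V → X
  | .var x => α x
  | .app f ts => A.I f (fun i => A.interp α (ts i))

/-- The term algebra `𝒯` on `T(F,V)`. -/
def termAlg (F : Type*) (ar : F → ℕ) (V : Type*) : Alg F ar (Tm F ar V) :=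
  ⟨fun f ts => Tm.app f ts⟩

/-- `(𝒜, ⊐)` is a probabilistic monotone `F`-algebra: each interpretation is
monotone with respect to `⊐` in each argument position. -/
def Alg.ProbMonotone {F X : Type*} {ar : F → ℕ} (A : Alg F ar X)
    (SQ : X → FinDist X → Prop) : Prop :=
  ∀ (f : F) (i : Fin (ar f)) (g : Fin (ar f) → X) (x : X) (d : FinDist X),
    SQ x d →
      SQ (A.I f (Function.update g i x))
         (d.map fun y => A.I f (Function.update g i y))

/-- Collapsibility of a relation `⊐` between elements and finite distributions. -/
def Collapsible {X : Type*} (SQ : X → FinDist X → Prop) : Prop :=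
  ∃ (G : X → ℝ≥0) (ε : ℝ≥0), 0 < ε ∧
    ∀ x d, SQ x d → G x ≥ ε + FinDist.exp G d

/-- `s ⊐_𝒜 d`: for every assignment `α`, `⟦s⟧_α ⊐ overline(⟦d⟧_α)`. -/
def Alg.Orient {F V X : Type*} {ar : F → ℕ} (A : Alg F ar X)
    (SQ : X → FinDist X → Prop) (s : Tm F ar V) (d : FinDist (Tm F ar V)) : Prop :=
  ∀ α : V → X, SQ (A.interp α s) (d.map (A.interp α))

/-- A probabilistic term rewrite system: a set of rules `l → d`. -/
abbrev PTRS (F : Type*) (ar : F → ℕ) (V : Type*) :=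
  Tm F ar V → FinDist (Tm F ar V) → Prop

/-- The PARS `R̂` induced by a PTRS `R`: closure of the rules under
contexts and substitutions. -/
def PTRS.hat {F V : Type*} {ar : F → ℕ} (R : PTRS F ar V) : PARS (Tm F ar V) :=
  fun s e =>
    ∃ (l : Tm F ar V) (d : FinDist (Tm F ar V)) (C : Ctx F ar V) (σ : V → Tm F ar V),
      R l d ∧ C.IsCtx ∧ s = C.plug (l.subst σ) ∧
      e = d.map (fun t => C.plug (t.subst σ))

/-- A PTRS is SAST if its induced PARS is. -/
def PTRS.SAST {F V : Type*} {ar : F → ℕ} (R : PTRS F ar V) : Prop :=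
  R.hat.SAST

/-- The reflexive closure `⪰` of a relation `≻`. -/
def ReflCl {X : Type*} (succ : X → X → Prop) (x y : X) : Prop := succ x y ∨ x = y

/-- `𝒜` is monotone with respect to `≻` in every argument. -/
def Alg.BMonotone {F X : Type*} {ar : F → ℕ} (A : Alg F ar X)
    (succ : X → X → Prop) : Prop :=
  ∀ (f : F) (i : Fin (ar f)) (g : Fin (ar f) → X) (x y : X),
    succ x y → succ (A.I f (Function.update g i x)) (A.I f (Function.update g i y))

/-- `𝒜` is concave with respect to `≻` (and the barycentric operation `EX`)
in every argument: `f_𝒜(…,E_X(d),…) ⪰ E_X(overline(f_𝒜(…,d,…)))`. -/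
def Alg.BConcave {F X : Type*} {ar : F → ℕ} (A : Alg F ar X)
    (EX : FinDist X → X) (succ : X → X → Prop) : Prop :=
  ∀ (f : F) (i : Fin (ar f)) (g : Fin (ar f) → X) (d : FinDist X),
    ReflCl succ (A.I f (Function.update g i (EX d)))
      (EX (d.map fun y => A.I f (Function.update g i y)))

/-- Collapsibility of a barycentric `F`-algebra: a concave function
`G : X → ℝ≥0` decreasing by at least `ε` along `≻`. -/
def BCollapsible {X : Type*} (EX : FinDist X → X) (succ : X → X → Prop) : Prop :=
  ∃ (G : X → ℝ≥0) (ε : ℝ≥0), 0 < ε ∧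
    (∀ d : FinDist X, G (EX d) ≥ FinDist.exp G d) ∧
    (∀ x y : X, succ x y → G x ≥ ε + G y)

-- AUX START
section MDLemmas
variable {A : Type*}

lemma MD.exp_add (f : A → ℝ≥0) (μ ν : MD A) :
    MD.exp f (μ + ν) = MD.exp f μ + MD.exp f ν := by
  simp [MD.exp]

lemma MD.exp_smul (f : A → ℝ≥0) (p : ℝ≥0) (μ : MD A) :
    MD.exp f (MD.smul p μ) = p * MD.exp f μ := by
  simp only [MD.exp, MD.smul, Multiset.map_map, Function.comp]
  rw [← Multiset.sum_map_mul_left]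
  congr 1
  exact Multiset.map_congr rfl (by intro x _; ring)

lemma MD.exp_sum {ι : Type*} (f : A → ℝ≥0) (s : Finset ι) (μ : ι → MD A) :
    MD.exp f (∑ i ∈ s, μ i) = ∑ i ∈ s, MD.exp f (μ i) := by
  classical
  induction s using Finset.cons_induction with
  | empty => simp [MD.exp]
  | cons a s ha ih => rw [Finset.sum_cons, Finset.sum_cons, MD.exp_add, ih]

lemma MD.wt_eq_exp (μ : MD A) : MD.wt μ = MD.exp (fun _ => 1) μ := by
  simp [MD.wt, MD.exp]

lemma MD.exp_single (f : A → ℝ≥0) (a : A) : MD.exp f ({(1, a)} : MD A) = f a := by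
  simp [MD.exp]

lemma FinDist.exp_map {B : Type*} (f : B → ℝ≥0) (h : A → B) (d : FinDist A) :
    FinDist.exp f (d.map h) = FinDist.exp (fun a => f (h a)) d := by
  unfold FinDist.exp FinDist.map
  exact Finsupp.sum_mapDomain_index (by simp) (fun a p q => add_mul p q _)

lemma MD.exp_toMD (f : A → ℝ≥0) (d : FinDist A) :
    MD.exp f d.toMD = FinDist.exp f d := by
  simp only [MD.exp, FinDist.toMD, FinDist.exp, Finsupp.sum, Multiset.map_map, Function.comp]
  rfl

lemma FinDist.exp_one (d : FinDist A) : FinDist.exp (fun _ => (1:ℝ≥0)) d = 1 := by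
  simp only [FinDist.exp, mul_one]
  exact d.sum_one

lemma MD.wt_toMD (d : FinDist A) : MD.wt d.toMD = 1 := by
  rw [MD.wt_eq_exp, MD.exp_toMD, FinDist.exp_one]

lemma step_exp {P : PARS A} {ε : ℝ≥0} {f : A → ℝ≥0} (hf : P.Ranking ε f) :
    ∀ {μ ρ : MD A}, P.Step μ ρ → ε * MD.wt ρ + MD.exp f ρ ≤ MD.exp f μ := by
  intro μ ρ h
  induction h with
  | term a ha => simp [MD.wt, MD.exp]
  | rule a d hd =>
      rw [MD.exp_toMD, MD.wt_toMD, MD.exp_single, mul_one]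
      exact hf a d hd
  | conv n p μ ρ hp hs ih =>
      rw [MD.exp_sum, MD.exp_sum, MD.wt_eq_exp, MD.exp_sum, Finset.mul_sum,
        ← Finset.sum_add_distrib]
      refine Finset.sum_le_sum fun i _ => ?_
      have := ih i
      calc ε * MD.exp (fun _ => 1) (MD.smul (p i) (ρ i)) + MD.exp f (MD.smul (p i) (ρ i))
          = p i * (ε * MD.wt (ρ i) + MD.exp f (ρ i)) := by
            rw [MD.exp_smul, MD.exp_smul, ← MD.wt_eq_exp]; ring
        _ ≤ p i * MD.exp f (μ i) := mul_le_mul_right (ih i) _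
        _ = MD.exp f (MD.smul (p i) (μ i)) := (MD.exp_smul _ _ _).symm

lemma ranking_sast {P : PARS A} {ε : ℝ≥0} {f : A → ℝ≥0} (hε : 0 < ε)
    (hf : P.Ranking ε f) : P.SAST := by
  intro a
  have key : ∀ μs : ℕ → MD A, P.RedSeqFrom {(1, a)} μs → ∀ N : ℕ,
      ε * ∑ n ∈ Finset.range N, MD.wt (μs (n + 1)) + MD.exp f (μs N) ≤ f a := by
    intro μs ⟨h0, hstep⟩ N
    induction N with
    | zero => simp [h0, MD.exp_single]
    | succ N ihN =>
        rw [Finset.sum_range_succ, mul_add]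
        calc ε * ∑ n ∈ Finset.range N, MD.wt (μs (n + 1)) + ε * MD.wt (μs (N + 1))
              + MD.exp f (μs (N + 1))
            = ε * ∑ n ∈ Finset.range N, MD.wt (μs (n + 1))
              + (ε * MD.wt (μs (N + 1)) + MD.exp f (μs (N + 1))) := by ring
          _ ≤ ε * ∑ n ∈ Finset.range N, MD.wt (μs (n + 1)) + MD.exp f (μs N) :=
              add_le_add_right (step_exp hf (hstep N)) _
          _ ≤ f a := ihN
  have bound : ∀ μs : ℕ → MD A, P.RedSeqFrom {(1, a)} μs →
      adl μs ≤ ((f a / ε : ℝ≥0) : ℝ≥0∞) := by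
    intro μs hμs
    have hN : ∀ N : ℕ, (∑ n ∈ Finset.range N, MD.wt (μs (n + 1))) ≤ f a / ε := by
      intro N
      rw [le_div_iff₀ hε]
      calc (∑ n ∈ Finset.range N, MD.wt (μs (n + 1))) * ε
          = ε * ∑ n ∈ Finset.range N, MD.wt (μs (n + 1)) := mul_comm _ _
        _ ≤ ε * ∑ n ∈ Finset.range N, MD.wt (μs (n + 1)) + MD.exp f (μs N) := le_self_add
        _ ≤ f a := key μs hμs N
    rw [adl, ENNReal.tsum_eq_iSup_sum]
    refine iSup_le fun s => ?_
    obtain ⟨N, hsN⟩ := s.exists_nat_subset_range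
    calc ∑ n ∈ s, (MD.wt (μs (n + 1)) : ℝ≥0∞)
        ≤ ∑ n ∈ Finset.range N, (MD.wt (μs (n + 1)) : ℝ≥0∞) :=
          Finset.sum_le_sum_of_subset hsN
      _ = ((∑ n ∈ Finset.range N, MD.wt (μs (n + 1)) : ℝ≥0) : ℝ≥0∞) := by
          rw [ENNReal.coe_finset_sum]
      _ ≤ _ := ENNReal.coe_le_coe.mpr (hN N)
  calc adh P a ≤ ((f a / ε : ℝ≥0) : ℝ≥0∞) := iSup₂_le bound
    _ < ⊤ := ENNReal.coe_lt_top

end MDLemmas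
-- AUX END

section AlgLemmas

lemma FinDist.ext' {A : Type*} {d e : FinDist A} (h : d.w = e.w) : d = e := by
  cases d; cases e; simpa using h

lemma FinDist.map_map {A B C : Type*} (h1 : A → B) (h2 : B → C) (d : FinDist A) :
    (d.map h1).map h2 = d.map (fun a => h2 (h1 a)) := by
  refine FinDist.ext' ?_
  show Finsupp.mapDomain h2 (Finsupp.mapDomain h1 d.w) = Finsupp.mapDomain (fun a => h2 (h1 a)) d.w
  exact (Finsupp.mapDomain_comp (f := h1) (g := h2)).symm

/-- `x` dominates the distribution `d` via one strict step followed by weak steps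
down to the barycenter. -/
def SQrel {X : Type*} (EX : FinDist X → X) (succ : X → X → Prop)
    (x : X) (d : FinDist X) : Prop :=
  ∃ z, succ x z ∧ Relation.ReflTransGen succ z (EX d)

lemma SQrel.lift {F X : Type*} {ar : F → ℕ} {A : Alg F ar X} {EX : FinDist X → X}
    {succ : X → X → Prop} (hmono : A.BMonotone succ) (hconc : A.BConcave EX succ)
    (f : F) (i : Fin (ar f)) (g : Fin (ar f) → X) {x : X} {d : FinDist X}
    (h : SQrel EX succ x d) :
    SQrel EX succ (A.I f (Function.update g i x))
      (d.map fun y => A.I f (Function.update g i y)) := by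
  obtain ⟨z, hxz, hz⟩ := h
  refine ⟨A.I f (Function.update g i z), hmono f i g _ _ hxz, ?_⟩
  have lift1 : Relation.ReflTransGen succ (A.I f (Function.update g i z))
      (A.I f (Function.update g i (EX d))) :=
    Relation.ReflTransGen.lift (fun y => A.I f (Function.update g i y))
      (fun a b hab => hmono f i g a b hab) _ _ hz
  refine lift1.trans ?_
  rcases hconc f i g d with h' | h'
  · exact Relation.ReflTransGen.single h'
  · rw [h']

lemma SQrel.G_bound {X : Type*} {EX : FinDist X → X} {succ : X → X → Prop}
    {G : X → ℝ≥0} {ε : ℝ≥0} (hGc : ∀ d : FinDist X, G (EX d) ≥ FinDist.exp G d)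
    (hGd : ∀ x y : X, succ x y → G x ≥ ε + G y)
    {x : X} {d : FinDist X} (h : SQrel EX succ x d) :
    G x ≥ ε + FinDist.exp G d := by
  obtain ⟨z, hxz, hz⟩ := h
  have hmon : ∀ {u w : X}, Relation.ReflTransGen succ u w → G w ≤ G u := by
    intro u w h
    induction h with
    | refl => exact le_rfl
    | tail _ hbc ih => exact le_trans (le_trans le_add_self (hGd _ _ hbc)) ih
  have h1 : G (EX d) ≤ G z := hmon hz
  calc ε + FinDist.exp G d ≤ ε + G (EX d) := add_le_add_right (hGc d) _
    _ ≤ ε + G z := add_le_add_right h1 _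
    _ ≤ G x := hGd x z hxz

lemma interp_subst {F V X : Type*} {ar : F → ℕ} (A : Alg F ar X) (α : V → X)
    (σ : V → Tm F ar V) : ∀ t : Tm F ar V,
    A.interp α (t.subst σ) = A.interp (fun v => A.interp α (σ v)) t
  | .var x => rfl
  | .app f ts => by
      simp only [Tm.subst, Alg.interp]
      congr 1
      funext i
      exact interp_subst A α σ (ts i)

lemma plug_holes_zero {F V : Type*} {ar : F → ℕ} :
    ∀ C : Ctx F ar V, C.holes = 0 → ∀ t t' : Tm F ar V, C.plug t = C.plug t'
  | .var (.inl _), _, _, _ => rfl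
  | .var (.inr _), h, _, _ => by simp [Ctx.holes] at h
  | .app f ts, h, t, t' => by
      simp only [Ctx.plug]
      congr 1
      funext i
      have hi : Ctx.holes (ts i) = 0 := by
        have := (Finset.sum_eq_zero_iff.mp h) i (Finset.mem_univ i)
        exact this
      exact plug_holes_zero (ts i) hi t t'

lemma exists_eq_one_of_sum_eq_one {n : ℕ} (g : Fin n → ℕ) (h : ∑ i, g i = 1) :
    ∃ i, g i = 1 ∧ ∀ j, j ≠ i → g j = 0 := by
  have hne : ∃ i ∈ Finset.univ, g i ≠ 0 := by
    by_contra hc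
    push_neg at hc
    rw [Finset.sum_eq_zero (fun i hi => hc i hi)] at h
    exact one_ne_zero h.symm
  obtain ⟨i, _, hi⟩ := hne
  have hsplit : g i + ∑ j ∈ Finset.univ.erase i, g j = 1 := by
    rw [Finset.add_sum_erase _ g (Finset.mem_univ i)]; exact h
  have hgi : g i = 1 ∧ ∑ j ∈ Finset.univ.erase i, g j = 0 := by omega
  refine ⟨i, hgi.1, fun j hj => ?_⟩
  exact Finset.sum_eq_zero_iff.mp hgi.2 j (Finset.mem_erase.mpr ⟨hj, Finset.mem_univ j⟩)

lemma plug_SQ {F V X : Type*} {ar : F → ℕ} (A : Alg F ar X) (EX : FinDist X → X)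
    (succ : X → X → Prop) (hmono : A.BMonotone succ) (hconc : A.BConcave EX succ)
    (α : V → X) (s : Tm F ar V) (d : FinDist (Tm F ar V))
    (hs : SQrel EX succ (A.interp α s) (d.map (A.interp α))) :
    ∀ C : Ctx F ar V, C.IsCtx →
      SQrel EX succ (A.interp α (C.plug s)) ((d.map fun t => C.plug t).map (A.interp α)) := by
  intro C
  induction C with
  | var v =>
      rcases v with x | u
      · intro h; simp [Ctx.IsCtx, Ctx.holes] at h
      · intro _
        have : ((d.map fun t => Ctx.plug (.var (.inr u)) t).map (A.interp α))
            = d.map (A.interp α) := by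
          rw [FinDist.map_map]
          congr 1
        rw [this]
        exact hs
  | app f ts ih =>
      intro hC
      obtain ⟨i0, hi0, hrest⟩ := exists_eq_one_of_sum_eq_one (fun i => Ctx.holes (ts i)) hC
      have hchild := ih i0 hi0
      set g : Fin (ar f) → X := fun j => A.interp α (Ctx.plug (ts j) s) with hg
      have hmain := SQrel.lift hmono hconc f i0 g hchild
      have e1 : A.I f (Function.update g i0 (A.interp α (Ctx.plug (ts i0) s)))
          = A.interp α (Ctx.plug (Tm.app f ts) s) := by
        show A.I f _ = A.I f _
        congr 1
        exact Function.update_eq_self i0 g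
      have e2 : ((d.map fun t => Ctx.plug (ts i0) t).map (A.interp α)).map
            (fun y => A.I f (Function.update g i0 y))
          = (d.map fun t => Ctx.plug (Tm.app f ts) t).map (A.interp α) := by
        rw [FinDist.map_map, FinDist.map_map, FinDist.map_map]
        congr 1
        funext t
        show A.I f (Function.update g i0 (A.interp α (Ctx.plug (ts i0) t)))
          = A.I f fun j => A.interp α (Ctx.plug (ts j) t)
        congr 1
        funext j
        by_cases hj : j = i0
        · subst hj; simp
        · rw [Function.update_of_ne hj, hg]
          exact congrArg (A.interp α) (plug_holes_zero (ts j) (hrest j hj) s t)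
      rw [e1, e2] at hmain
      exact hmain

end AlgLemmas

set_option maxHeartbeats 1000000 in
/-- soundness of collapsible barycentric `F`-algebras:
if `⟦l⟧_α ≻ E_X(overline(⟦d⟧_α))` for every rule `l → d ∈ R` and every
assignment `α`, then `R` is SAST. -/
theorem stmt_14 {F V X : Type*} [Countable V] [Infinite V] [Nonempty X]
    {ar : F → ℕ} (A : Alg F ar X) (EX : FinDist X → X) (succ : X → X → Prop)
    (hmono : A.BMonotone succ) (hconc : A.BConcave EX succ)
    (hcol : BCollapsible EX succ)
    (R : PTRS F ar V)
    (hR : ∀ l d, R l d → ∀ α : V → X,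
      succ (A.interp α l) (EX (d.map (A.interp α)))) :
    R.SAST := by
  obtain ⟨G, ε, hε, hGc, hGd⟩ := hcol
  obtain ⟨x0⟩ := ‹Nonempty X›
  have hrank : R.hat.Ranking ε (fun t => G (A.interp (fun _ : V => x0) t)) := by
    intro s e hse
    obtain ⟨l, d, C, σ, hld, hC, rfl, rfl⟩ := hse
    have hbase : SQrel EX succ (A.interp (fun _ : V => x0) (l.subst σ))
        ((d.map fun t => t.subst σ).map (A.interp (fun _ : V => x0))) := by
      have h1 : (d.map fun t => t.subst σ).map (A.interp (fun _ : V => x0))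
          = d.map (A.interp fun v => A.interp (fun _ : V => x0) (σ v)) := by
        rw [FinDist.map_map]
        congr 1
        funext t
        exact interp_subst A _ σ t
      rw [h1, interp_subst A _ σ l]
      exact ⟨_, hR l d hld _, Relation.ReflTransGen.refl⟩
    have hplug : SQrel EX succ (A.interp (fun _ : V => x0) (C.plug (l.subst σ)))
        (((d.map fun t => t.subst σ).map fun t => C.plug t).map (A.interp (fun _ : V => x0))) :=
      plug_SQ A EX succ hmono hconc (fun _ : V => x0) _ _ hbase C hC
    have he : d.map (fun t => C.plug (t.subst σ))
        = (d.map fun t => t.subst σ).map fun t => C.plug t := by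
      rw [FinDist.map_map]
    rw [he]
    have hexp := FinDist.exp_map G (A.interp (fun _ : V => x0))
      ((d.map fun t => t.subst σ).map fun t => C.plug t)
    calc ε + FinDist.exp (fun t => G (A.interp (fun _ : V => x0) t))
          ((d.map fun t => t.subst σ).map fun t => C.plug t)
        = ε + FinDist.exp G (((d.map fun t => t.subst σ).map fun t => C.plug t).map
            (A.interp (fun _ : V => x0))) := by rw [hexp]
      _ ≤ G (A.interp (fun _ : V => x0) (C.plug (l.subst σ))) := SQrel.G_bound hGc hGd hplug
  exact ranking_sast hε hrank
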